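/- arXiv:2510.14483 — 5 statements merged into one kernel-verified Lean document; each statement's English description precedes it below -/
import Mathlib

section
/- Let k ≥ 1 and N ≥ 2 be integers and set n = k + N − 1. Suppose P, H_{N+1}, …, H_{n+1} ∈ ℚ[X_1,…,X_k] satisfy P(e_1,…,e_k) = p_{n+2} and H_r(e_1,…,e_k) = h_r for N+1 ≤ r ≤ n+1, where e_i, p_m, h_r are the elementary symmetric, power sum, and complete homogeneous symmetric polynomials in t_1,…,t_k. Regard these as polynomials with complex coefficients and fix z ∈ ℂ. Let W = (1/(n+2))·P + (−1)^k · z · X_1 ∈ ℂ[X_1,…,X_k]. Then the ideal of ℂ[X_1,…,X_k] generated by ∂W/∂X_1, …, ∂W/∂X_k equals the ideal generated by H_{N+1}, …, H_n and H_{n+1} + (−1)^k z. -/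
open MvPolynomial

/-- The Landau–Ginzburg potential `W_{k,N} = (1/(n+2))·p_{n+2} + (−1)^k z X_1`,
where `P ∈ ℚ[X_1,…,X_k]` is the polynomial expressing the power sum `p_{n+2}`
in the elementary symmetric polynomials, regarded with complex coefficients. -/
noncomputable def WPot (k n : ℕ) (hk : 1 ≤ k) (P : MvPolynomial (Fin k) ℚ) (z : ℂ) :
    MvPolynomial (Fin k) ℂ :=
  C (((n : ℂ) + 2)⁻¹) * (MvPolynomial.map (algebraMap ℚ ℂ) P)
    + C ((-1 : ℂ) ^ k * z) * X ⟨0, hk⟩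

/-!
Write `t₁, …, t_k` for the variables and `ê_l` for the elementary symmetric polynomials in the
variables other than `t_j`, so that `∂e_{l+1}/∂t_j = ê_l`. By the chain rule,
`P(e₁, …, e_k) = p_{n+2}` gives `∑ₗ (∂P/∂X_{l+1})(e) · ê_l = (n+2) t_j^{n+1}` for every `j`.
Comparing coefficients of `u^{n+1}` in `∏_{i ≠ j} (1 - tᵢu) · ∏ᵢ (1 - tᵢu)⁻¹ = (1 - t_ju)⁻¹`
shows that `(-1)^l (n+2) h_{n+1-l}` solves the same linear system. Its matrix, the Jacobian of
`(e₁, …, e_k)`, is a triangular matrix with diagonal `±1` times a Vandermonde matrix, so the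
solution is unique, and the algebraic independence of the `eᵢ` gives
`∂P/∂X_{l+1} = (-1)^l (n+2) H_{n+1-l}`. Up to the units `(-1)^l`, the partial derivatives of `W`
are therefore `H_{n+1-l}` for `1 ≤ l < k` and `H_{n+1} + (-1)^k z` for `l = 0`.
-/

open Finset

theorem Multiset.esymm_cons_succ {R : Type*} [CommSemiring R] (a : R) (s : Multiset R) (m : ℕ) :
    (a ::ₘ s).esymm (m + 1) = s.esymm (m + 1) + a * s.esymm m := by
  simp [Multiset.esymm, Multiset.powersetCard_cons, Multiset.sum_map_mul_left]

theorem Finset.sym_succ_insert {α : Type*} [DecidableEq α] (a : α) (s : Finset α) (r : ℕ) :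
    (insert a s).sym (r + 1) = s.sym (r + 1) ∪ ((insert a s).sym r).image (Sym.cons a) := by
  ext μ
  simp only [mem_union, mem_image, mem_sym_iff, mem_insert]
  constructor
  · intro hμ
    by_cases ha : a ∈ μ
    · exact .inr ⟨μ.erase a ha, fun b hb => hμ b (Multiset.mem_of_mem_erase hb),
        Sym.cons_erase ha⟩
    · exact .inl fun b hb => (hμ b hb).resolve_left (by rintro rfl; exact ha hb)
  · rintro (hμ | ⟨ν, hν, rfl⟩) b hb
    · exact .inr (hμ b hb)
    · exact (Sym.mem_cons.1 hb).elim .inl (hν b)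

namespace MvPolynomial

theorem pderiv_aeval {σ τ R : Type*} [CommSemiring R] [Fintype τ]
    (e : τ → MvPolynomial σ R) (j : σ) (P : MvPolynomial τ R) :
    pderiv j (aeval e P) = ∑ i, aeval e (pderiv i P) * pderiv j (e i) := by
  classical
  induction P using MvPolynomial.induction_on with
  | C a => simp
  | add p q hp hq => simp only [map_add, hp, hq, add_mul, sum_add_distrib]
  | mul_X p i hp =>
    simp only [pderiv_mul, map_add, map_mul, aeval_X, hp, add_mul, sum_add_distrib, sum_mul,
      pderiv_X, Pi.single_apply, apply_ite (aeval e), map_zero, mul_ite, mul_one, mul_zero,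
      ite_mul, zero_mul, sum_ite_eq, mem_univ, if_true]
    exact congrArg (· + _) (sum_congr rfl fun l _ => mul_right_comm _ _ _)

section FinsetSymmetric

variable {σ : Type*} (R : Type*) [CommRing R]

noncomputable def esymmOn (s : Finset σ) (m : ℕ) : MvPolynomial σ R := (s.val.map X).esymm m

noncomputable def hsymmOn [DecidableEq σ] (s : Finset σ) (r : ℕ) : MvPolynomial σ R :=
  ∑ μ ∈ s.sym r, (μ.1.map X).prod

variable {R}

@[simp]
theorem esymmOn_zero (s : Finset σ) : esymmOn R s 0 = 1 := by
  simp [esymmOn, Multiset.esymm]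

theorem esymmOn_eq_zero_of_card_lt {s : Finset σ} {m : ℕ} (h : s.card < m) :
    esymmOn R s m = 0 := by
  rw [esymmOn, Multiset.esymm, Multiset.powersetCard_eq_empty _ (by simpa using h)]
  simp

theorem esymmOn_univ [Fintype σ] (m : ℕ) : esymmOn R (univ : Finset σ) m = esymm σ R m := by
  rw [esymm_eq_multiset_esymm]
  rfl

variable [DecidableEq σ]

theorem esymmOn_insert_succ {a : σ} {s : Finset σ} (h : a ∉ s) (m : ℕ) :
    esymmOn R (insert a s) (m + 1) = esymmOn R s (m + 1) + X a * esymmOn R s m := by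
  rw [esymmOn, insert_val_of_notMem h, Multiset.map_cons, Multiset.esymm_cons_succ]
  rfl

@[simp]
theorem hsymmOn_zero (s : Finset σ) : hsymmOn R s 0 = 1 := by
  rw [hsymmOn, Finset.sym_zero, sum_singleton]
  rfl

theorem hsymmOn_empty_succ (r : ℕ) : hsymmOn R (∅ : Finset σ) (r + 1) = 0 := by
  simp [hsymmOn]

theorem hsymmOn_univ [Fintype σ] (r : ℕ) : hsymmOn R (univ : Finset σ) r = hsymm σ R r := by
  rw [hsymmOn, Finset.sym_univ, hsymm]

theorem hsymmOn_insert_succ {a : σ} {s : Finset σ} (h : a ∉ s) (r : ℕ) :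
    hsymmOn R (insert a s) (r + 1) = hsymmOn R s (r + 1) + X a * hsymmOn R (insert a s) r := by
  have hdisj : Disjoint (s.sym (r + 1)) (((insert a s).sym r).image (Sym.cons a)) := by
    refine disjoint_left.2 fun μ hμ hμ' => ?_
    obtain ⟨ν, -, rfl⟩ := mem_image.1 hμ'
    exact h (mem_sym_iff.1 hμ a (Sym.mem_cons_self a ν))
  unfold hsymmOn
  rw [Finset.sym_succ_insert, sum_union hdisj,
    sum_image fun _ _ _ _ => (Sym.cons_inj_right a _ _).1, mul_sum]
  congr 1
  refine sum_congr rfl fun ν _ => ?_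
  simp [Sym.cons]

variable (R) in
/-- The coefficient of `T ^ r` in `∏ i ∈ s, (1 - X i * T) / ∏ i ∈ u, (1 - X i * T)`. -/
noncomputable def esymmHsymmConv (s u : Finset σ) (r : ℕ) : MvPolynomial σ R :=
  ∑ p ∈ antidiagonal r, (-1) ^ p.1 * esymmOn R s p.1 * hsymmOn R u p.2

@[simp]
theorem esymmHsymmConv_zero (s u : Finset σ) : esymmHsymmConv R s u 0 = 1 := by
  simp [esymmHsymmConv]

theorem esymmHsymmConv_insert_left {a : σ} {s : Finset σ} (h : a ∉ s) (u : Finset σ)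
    (r : ℕ) :
    esymmHsymmConv R (insert a s) u (r + 1)
      = esymmHsymmConv R s u (r + 1) - X a * esymmHsymmConv R s u r := by
  simp only [esymmHsymmConv, Nat.sum_antidiagonal_succ, esymmOn_zero, esymmOn_insert_succ h,
    mul_sum, add_sub_assoc, ← sum_sub_distrib]
  congr 1
  refine sum_congr rfl fun p _ => ?_
  ring

theorem esymmHsymmConv_insert_right (s : Finset σ) {a : σ} {u : Finset σ} (h : a ∉ u)
    (r : ℕ) :
    esymmHsymmConv R s (insert a u) (r + 1)
      = esymmHsymmConv R s u (r + 1) + X a * esymmHsymmConv R s (insert a u) r := by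
  simp only [esymmHsymmConv, Nat.sum_antidiagonal_succ', hsymmOn_zero, hsymmOn_insert_succ h,
    mul_sum, add_assoc, ← sum_add_distrib]
  congr 1
  refine sum_congr rfl fun p _ => ?_
  ring

theorem esymmHsymmConv_self_succ (s : Finset σ) (r : ℕ) : esymmHsymmConv R s s (r + 1) = 0 := by
  induction s using Finset.induction_on with
  | empty =>
    refine sum_eq_zero fun p hp => ?_
    rcases p with ⟨_ | i, _ | j⟩
    · simp at hp
    · simp [hsymmOn_empty_succ]
    · simp [esymmOn_eq_zero_of_card_lt (show (∅ : Finset σ).card < i + 1 by simp)]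
    · simp [hsymmOn_empty_succ]
  | insert a s ha ih =>
    rw [esymmHsymmConv_insert_left ha, esymmHsymmConv_insert_right _ ha, ih]
    ring

theorem esymmHsymmConv_insert_self {a : σ} {s : Finset σ} (h : a ∉ s) (r : ℕ) :
    esymmHsymmConv R s (insert a s) r = X a ^ r := by
  induction r with
  | zero => simp
  | succ r ih => rw [esymmHsymmConv_insert_right _ h, esymmHsymmConv_self_succ, ih]; ring

theorem pderiv_esymmOn_of_notMem {j : σ} {s : Finset σ} (h : j ∉ s) (m : ℕ) :
    pderiv j (esymmOn R s m) = 0 := by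
  induction s using Finset.induction_on generalizing m with
  | empty =>
    cases m with
    | zero => simp
    | succ m => rw [esymmOn_eq_zero_of_card_lt (by simp), map_zero]
  | insert a s ha ih =>
    obtain ⟨hja, hjs⟩ := not_or.1 (mem_insert.not.1 h)
    cases m with
    | zero => simp
    | succ m => simp [esymmOn_insert_succ ha, ih hjs, pderiv_X_of_ne (Ne.symm hja)]

theorem esymmOn_eq_sum_antidiagonal {a : σ} {s : Finset σ} (h : a ∉ s) (l : ℕ) :
    esymmOn R s l
      = ∑ p ∈ antidiagonal l, (-1) ^ p.1 * X a ^ p.1 * esymmOn R (insert a s) p.2 := by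
  induction l with
  | zero => simp
  | succ l ih =>
    rw [Nat.sum_antidiagonal_succ, esymmOn_insert_succ h, ih, mul_sum]
    simp only [pow_zero, one_mul]
    rw [add_assoc, ← sum_add_distrib, left_eq_add]
    refine sum_eq_zero fun p _ => ?_
    ring

theorem pderiv_esymm_succ [Fintype σ] (j : σ) (m : ℕ) :
    pderiv j (esymm σ R (m + 1)) = esymmOn R (univ.erase j) m := by
  have hj : j ∉ univ.erase j := notMem_erase j univ
  rw [← esymmOn_univ, ← insert_erase (mem_univ j), esymmOn_insert_succ hj]
  simp [pderiv_esymmOn_of_notMem hj]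

theorem pderiv_psum_succ [Fintype σ] (j : σ) (d : ℕ) :
    pderiv j (psum σ R (d + 1)) = (d + 1 : MvPolynomial σ R) * X j ^ d := by
  rw [psum, map_sum, sum_eq_single j (fun l _ hl => by simp [pderiv_X_of_ne hl]) (by simp)]
  simp

end FinsetSymmetric

section Jacobian

variable {R : Type*} [CommRing R] {k : ℕ}

theorem sum_esymmOn_erase_mul_hsymm {d : ℕ} (hkd : k ≤ d + 1) (j : Fin k) :
    ∑ l : Fin k, (-1) ^ (l : ℕ) * esymmOn R (univ.erase j) l * hsymm (Fin k) R (d - l)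
      = X j ^ d := by
  have hconv := esymmHsymmConv_insert_self (R := R) (notMem_erase j univ) d
  rw [insert_erase (mem_univ j), esymmHsymmConv, Nat.sum_antidiagonal_eq_sum_range_succ_mk]
    at hconv
  rw [← hconv, Fin.sum_univ_eq_sum_range
    (fun l => (-1) ^ l * esymmOn R (univ.erase j) l * hsymm (Fin k) R (d - l)) k]
  simp only [hsymmOn_univ]
  refine sum_subset (range_subset_range.2 hkd) fun m _ hm => ?_
  have hcard : (univ.erase j).card < m := by
    rw [card_erase_of_mem (mem_univ j), card_univ, Fintype.card_fin]
    simp only [mem_range, not_lt] at hm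
    have := j.pos
    omega
  rw [esymmOn_eq_zero_of_card_lt hcard, mul_zero, zero_mul]

theorem jacobian_esymm_eq_mul_vandermonde :
    (Matrix.of fun l j : Fin k => pderiv j (esymm (Fin k) R (l + 1)))
      = Matrix.of (fun l m : Fin k =>
          if (m : ℕ) ≤ l then (-1) ^ (m : ℕ) * esymm (Fin k) R (l - m) else 0)
        * (Matrix.vandermonde fun j : Fin k => (X j : MvPolynomial (Fin k) R)).transpose := by
  refine Matrix.ext fun l j => ?_
  rw [Matrix.mul_apply, Matrix.of_apply, pderiv_esymm_succ,
    esymmOn_eq_sum_antidiagonal (notMem_erase j univ), insert_erase (mem_univ j),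
    Nat.sum_antidiagonal_eq_sum_range_succ_mk]
  simp only [Matrix.of_apply, Matrix.transpose_apply, Matrix.vandermonde_apply, esymmOn_univ]
  rw [Fin.sum_univ_eq_sum_range (fun m : ℕ =>
    (if m ≤ (l : ℕ) then (-1) ^ m * esymm (Fin k) R (l - m) else 0) * X j ^ m) k]
  refine Eq.trans (sum_congr rfl fun m hm => ?_) (sum_subset (range_subset_range.2 l.isLt) ?_)
  · rw [if_pos (Nat.lt_succ_iff.1 (mem_range.1 hm))]
    ring
  · intro m _ hm
    rw [if_neg (by simpa using hm), zero_mul]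

theorem det_jacobian_esymm_ne_zero [IsDomain R] :
    (Matrix.of fun l j : Fin k => pderiv j (esymm (Fin k) R (l + 1))).det ≠ 0 := by
  rw [jacobian_esymm_eq_mul_vandermonde, Matrix.det_mul, Matrix.det_transpose,
    Matrix.det_of_isLowerTriangular _ (by intro l m hlm; exact if_neg (not_le.2 hlm))]
  refine mul_ne_zero (prod_ne_zero_iff.2 fun m _ => ?_)
    (Matrix.det_vandermonde_ne_zero_iff.2 (X_injective (σ := Fin k) (R := R)))
  simp [esymm_zero]

theorem aeval_esymm_pderiv_of_aeval_esymm_eq_psum [IsDomain R] {d : ℕ} (hkd : k ≤ d + 1)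
    {P : MvPolynomial (Fin k) R}
    (hP : aeval (fun i : Fin k => esymm (Fin k) R (i + 1)) P = psum (Fin k) R (d + 1))
    (i : Fin k) :
    aeval (fun i : Fin k => esymm (Fin k) R (i + 1)) (pderiv i P)
      = (-1) ^ (i : ℕ) * (d + 1) * hsymm (Fin k) R (d - i) := by
  set e := fun i : Fin k => esymm (Fin k) R (i + 1)
  suffices (fun l : Fin k =>
      aeval e (pderiv l P) - (-1) ^ (l : ℕ) * (d + 1) * hsymm (Fin k) R (d - l)) = 0 from
    sub_eq_zero.1 (congrFun this i)
  refine Matrix.eq_zero_of_vecMul_eq_zero det_jacobian_esymm_ne_zero ?_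
  funext j
  have hchain : ∑ l, aeval e (pderiv l P) * pderiv j (e l)
      = ((d : MvPolynomial (Fin k) R) + 1) * X j ^ d := by
    rw [← pderiv_aeval, hP, pderiv_psum_succ]
  simp only [Matrix.vecMul, dotProduct, Matrix.of_apply, sub_mul, sum_sub_distrib]
  rw [hchain, ← sum_esymmOn_erase_mul_hsymm hkd j, mul_sum, Pi.zero_apply, sub_eq_zero]
  refine sum_congr rfl fun l _ => ?_
  rw [pderiv_esymm_succ]
  ring

theorem pderiv_eq_C_mul_of_aeval_esymm [IsDomain R] {d : ℕ} (hkd : k ≤ d + 1)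
    {P : MvPolynomial (Fin k) R}
    (hP : aeval (fun i : Fin k => esymm (Fin k) R (i + 1)) P = psum (Fin k) R (d + 1))
    {i : Fin k} {Q : MvPolynomial (Fin k) R}
    (hQ : aeval (fun i : Fin k => esymm (Fin k) R (i + 1)) Q = hsymm (Fin k) R (d - i)) :
    pderiv i P = C ((-1) ^ (i : ℕ) * (d + 1 : R)) * Q := by
  refine esymmAlgHom_fin_injective R (le_refl k) (Subtype.ext ?_)
  rw [esymmAlgHom_apply, esymmAlgHom_apply, map_mul, aeval_C, hQ,
    aeval_esymm_pderiv_of_aeval_esymm_eq_psum hkd hP i]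
  simp [algebraMap_eq]

end Jacobian

end MvPolynomial

theorem Ideal.span_range_mul_isUnit {ι α : Type*} [CommSemiring α] {u : ι → α}
    (hu : ∀ i, IsUnit (u i)) (g : ι → α) :
    Ideal.span (Set.range fun i => u i * g i) = Ideal.span (Set.range g) := by
  refine le_antisymm (Ideal.span_le.2 ?_) (Ideal.span_le.2 ?_) <;> rintro _ ⟨i, rfl⟩
  · exact Ideal.mul_mem_left _ _ (Ideal.subset_span ⟨i, rfl⟩)
  · obtain ⟨v, hv⟩ := hu i
    have : g i = ↑v⁻¹ * (u i * g i) := by rw [← hv, Units.inv_mul_cancel_left]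
    rw [this]
    exact Ideal.mul_mem_left _ _ (Ideal.subset_span ⟨i, rfl⟩)

theorem Set.range_fin_sub_add_ite {M : Type*} [AddZeroClass M] (f : ℕ → M) (c : M) {k m : ℕ}
    (hk : 0 < k) (hm : 0 < m) :
    Set.range (fun i : Fin k => f (m - i) + if (i : ℕ) = 0 then c else 0)
      = f '' Set.Icc (m + 1 - k) (m - 1) ∪ {f m + c} := by
  ext x
  simp only [Set.mem_range, Set.mem_union, Set.mem_image, Set.mem_Icc, Set.mem_singleton_iff]
  constructor
  · rintro ⟨i, rfl⟩
    by_cases hi : (i : ℕ) = 0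
    · exact .inr (by simp [hi])
    · exact .inl ⟨m - i, ⟨by omega, by omega⟩, by simp [hi]⟩
  · rintro (⟨r, hr, rfl⟩ | rfl)
    · refine ⟨⟨m - r, by omega⟩, ?_⟩
      simp only [show m - (m - r) = r by omega, if_neg (show m - r ≠ 0 by omega), add_zero]
    · exact ⟨⟨0, hk⟩, by simp⟩

theorem pderiv_WPot (k n : ℕ) (hk : 1 ≤ k) (P : MvPolynomial (Fin k) ℚ) (z : ℂ)
    (i : Fin k) :
    pderiv i (WPot k n hk P z)
      = C ((n + 2 : ℂ)⁻¹) * map (algebraMap ℚ ℂ) (pderiv i P)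
        + if (i : ℕ) = 0 then C ((-1) ^ k * z) else 0 := by
  simp [WPot, pderiv_map, pderiv_X, Pi.single_apply, Fin.ext_iff, eq_comm]

theorem jacobian_ideal_eq_quantum_ideal_general (k N n : ℕ) (hk : 1 ≤ k)
    (hn : n = k + N - 1)
    (P : MvPolynomial (Fin k) ℚ) (H : ℕ → MvPolynomial (Fin k) ℚ)
    (hP : aeval (fun i : Fin k => esymm (Fin k) ℚ ((i : ℕ) + 1)) P
        = psum (Fin k) ℚ (n + 2))
    (hH : ∀ r : ℕ, N + 1 ≤ r → r ≤ n + 1 →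
        aeval (fun i : Fin k => esymm (Fin k) ℚ ((i : ℕ) + 1)) (H r)
          = hsymm (Fin k) ℚ r)
    (z : ℂ) :
    Ideal.span (Set.range fun i : Fin k => pderiv i (WPot k n hk P z))
      = Ideal.span
          (((fun r : ℕ => MvPolynomial.map (algebraMap ℚ ℂ) (H r)) '' Set.Icc (N + 1) n)
            ∪ {MvPolynomial.map (algebraMap ℚ ℂ) (H (n + 1)) + C ((-1 : ℂ) ^ k * z)}) := by
  have hpderivP (i : Fin k) :
      pderiv i P = C ((-1) ^ (i : ℕ) * ((n + 1 : ℕ) + 1 : ℚ)) * H (n + 1 - i) :=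
    pderiv_eq_C_mul_of_aeval_esymm (by omega) hP (hH _ (by omega) (by omega))
  have hW (i : Fin k) : pderiv i (WPot k n hk P z) = C ((-1 : ℂ) ^ (i : ℕ)) *
      (map (algebraMap ℚ ℂ) (H (n + 1 - i)) +
        if (i : ℕ) = 0 then C ((-1) ^ k * z) else 0) := by
    have hcoef : ((n : ℂ) + 2)⁻¹ * algebraMap ℚ ℂ ((-1) ^ (i : ℕ) * ((n + 1 : ℕ) + 1))
        = (-1) ^ (i : ℕ) := by
      have : (n : ℂ) + 2 ≠ 0 := by exact_mod_cast (by omega : n + 2 ≠ 0)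
      push_cast
      field_simp
      ring
    rw [pderiv_WPot, hpderivP, map_mul, map_C, ← mul_assoc, ← C_mul, hcoef, mul_add]
    split_ifs with h <;> simp [h]
  rw [show (fun i : Fin k => pderiv i (WPot k n hk P z)) = _ from funext hW,
    Ideal.span_range_mul_isUnit fun i => (isUnit_neg_one.pow _).map C,
    Set.range_fin_sub_add_ite (fun r => map (algebraMap ℚ ℂ) (H r)) _ hk (by omega : 0 < n + 1),
    show n + 1 + 1 - k = N + 1 by omega, Nat.add_sub_cancel]

/-- **Proposition 3.3 of the paper.**  With `n = k + N − 1`, if `P` expresses the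
power sum `p_{n+2}` and `H r` expresses the complete homogeneous symmetric
polynomial `h_r` (for `N+1 ≤ r ≤ n+1`) in terms of the elementary symmetric
polynomials, then for each `z ∈ ℂ` the Jacobian ideal of
`W = (1/(n+2))·P + (−1)^k z X_1` in `ℂ[X_1,…,X_k]` equals the ideal generated by
`H_{N+1},…,H_n` and `H_{n+1} + (−1)^k z`. -/
theorem jacobian_ideal_eq_quantum_ideal (k N n : ℕ) (hk : 1 ≤ k) (hN : 2 ≤ N)
    (hn : n = k + N - 1)
    (P : MvPolynomial (Fin k) ℚ) (H : ℕ → MvPolynomial (Fin k) ℚ)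
    (hP : aeval (fun i : Fin k => esymm (Fin k) ℚ ((i : ℕ) + 1)) P
        = psum (Fin k) ℚ (n + 2))
    (hH : ∀ r : ℕ, N + 1 ≤ r → r ≤ n + 1 →
        aeval (fun i : Fin k => esymm (Fin k) ℚ ((i : ℕ) + 1)) (H r)
          = hsymm (Fin k) ℚ r)
    (z : ℂ) :
    Ideal.span (Set.range fun i : Fin k => pderiv i (WPot k n hk P z))
      = Ideal.span
          (((fun r : ℕ => MvPolynomial.map (algebraMap ℚ ℂ) (H r)) '' Set.Icc (N + 1) n)
            ∪ {MvPolynomial.map (algebraMap ℚ ℂ) (H (n + 1)) + C ((-1 : ℂ) ^ k * z)}) :=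
  jacobian_ideal_eq_quantum_ideal_general k N n hk hn P H hP hH z
end

section
/- Let n ≥ k ≥ 1 be integers and let w be a nonzero complex number. Let r_1 > r_2 > … > r_k and l_1 > l_2 > … > l_k be two strictly decreasing sequences of integers with all values in {0,…,n}. Then the sum, over all k-tuples (t_1,…,t_k) of complex numbers with t_i^{n+1} = w for each i (each t_i ranging independently over all (n+1)-th roots of w), of det((t_i^{r_j})_{1≤i,j≤k}) · det((t_i^{l_j})_{1≤i,j≤k}) · t_1 t_2 ⋯ t_k, equals k! · ((n+1)·w)^k · (−1)^{⌊k/2⌋} if r_j + l_{k+1−j} = n for every j = 1,…,k, and equals 0 otherwise. -/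
/-!
Expanding both determinants and summing over the tuple one coordinate at a time (the discrete
Andréief identity) turns the sum into `k! * det G`, where
`G i j = ∑_{z ^ (n+1) = w} z ^ (r i + l j + 1)`. The roots are `α * ζ ^ m` for one root `α` and a
primitive `(n+1)`-th root of unity `ζ`, so such a power sum is a geometric sum in `ζ` and vanishes
unless `n + 1` divides the exponent; as the exponent lies in `[1, 2n+1]`, `G i j = (n+1) * w` if
`r i + l j = n` and `0` otherwise. Since `r` and `l` are strictly decreasing, the only permutation
along which this pattern has no zero entry is the reversal `j ↦ k - 1 - j`, whose sign is
`(-1) ^ ⌊k/2⌋`.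
-/

open Equiv Finset Matrix Polynomial

theorem Fin.revPerm_succ (k : ℕ) :
    (revPerm : Perm (Fin (k + 1))) = Perm.decomposeFin.symm (0, revPerm) * finRotate (k + 1) := by
  ext j
  refine Fin.lastCases ?_ (fun i => ?_) j
  · simp
  · simp [Perm.decomposeFin_symm_apply_succ]
    omega

theorem Fin.sign_revPerm (k : ℕ) : Perm.sign (revPerm : Perm (Fin k)) = (-1) ^ (k / 2) := by
  induction k with
  | zero => rfl
  | succ k ih =>
    rw [Fin.revPerm_succ, Perm.sign_mul, Perm.decomposeFin.symm_sign, ih, sign_finRotate,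
      if_pos rfl, one_mul, Nat.add_sub_cancel, ← pow_add, Int.units_pow_eq_pow_mod_two,
      Int.units_pow_eq_pow_mod_two _ ((k + 1) / 2)]
    congr 1
    obtain ⟨m, rfl | rfl⟩ := Nat.even_or_odd' k <;> omega

theorem Fin.eq_revPerm_of_strictAnti {k : ℕ} {σ : Perm (Fin k)} (hσ : StrictAnti σ) :
    σ = revPerm := by
  have hmono : StrictMono (Fin.rev ∘ σ) := fun i j hij => Fin.rev_lt_rev.mpr (hσ hij)
  ext i : 1
  exact Fin.rev_eq_iff.mp (congrFun hmono.eq_id i)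

section Determinants

variable {R α ι : Type*} [CommRing R] [Fintype ι] [DecidableEq ι]

theorem Matrix.det_of_sum_finset (S : ι → Finset α) (v : ι → α → ι → R) :
    det (of fun i => ∑ z ∈ S i, v i z) = ∑ t ∈ Fintype.piFinset S, det (of fun i => v i (t i)) :=
  (detRowAlternating : (ι → R) [⋀^ι]→ₗ[R] R).toMultilinearMap.map_sum_finset v S

theorem Matrix.sum_det_mul_det_mul_prod (S : Finset α) (f g : ι → α → R) (ω : α → R) :
    ∑ t ∈ Fintype.piFinset fun _ : ι => S,
        det (of fun i j => f j (t i)) * det (of fun i j => g j (t i)) * ∏ i, ω (t i)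
      = (Fintype.card ι).factorial * det (of fun i j => ∑ z ∈ S, f i z * g j z * ω z) := by
  set H : Matrix ι ι R := of fun a j => ∑ z ∈ S, g a z * ω z * f j z
  have hexpand : ∀ t : ι → α, det (of fun i j => g j (t i))
      = ∑ τ : Perm ι, Perm.sign τ * ∏ i, g (τ i) (t i) := fun t => by
    rw [← det_transpose, det_apply']
    rfl
  have hτ : ∀ τ : Perm ι, ∑ t ∈ Fintype.piFinset fun _ : ι => S,
      det (of fun i j => f j (t i)) * (∏ i, g (τ i) (t i)) * ∏ i, ω (t i)
        = Perm.sign τ * det H := by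
    intro τ
    have hrows : H.submatrix τ id = of fun i => ∑ z ∈ S, fun j => g (τ i) z * ω z * f j z := by
      ext i j
      simp [H, Finset.sum_apply]
    rw [← det_permute, hrows, det_of_sum_finset]
    refine sum_congr rfl fun t _ => ?_
    have hscale := det_mul_column (fun i => g (τ i) (t i) * ω (t i)) (of fun i j => f j (t i))
    simp only [of_apply] at hscale
    rw [hscale, prod_mul_distrib]
    ring
  calc _ = ∑ τ : Perm ι, Perm.sign τ * ∑ t ∈ Fintype.piFinset fun _ : ι => S,
          det (of fun i j => f j (t i)) * (∏ i, g (τ i) (t i)) * ∏ i, ω (t i) := by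
        simp only [hexpand, Finset.mul_sum, Finset.sum_mul]
        rw [sum_comm]
        exact sum_congr rfl fun τ _ => sum_congr rfl fun t _ => by ring
    _ = ∑ _τ : Perm ι, det H := by
        refine sum_congr rfl fun τ _ => ?_
        rw [hτ, ← mul_assoc, ← Int.cast_mul, ← Units.val_mul, Int.units_mul_self, Units.val_one,
          Int.cast_one, one_mul]
    _ = _ := by
        rw [sum_const, card_univ, Fintype.card_perm, nsmul_eq_mul, ← det_transpose]
        congr 2
        ext i j
        simp [H, mul_comm, mul_left_comm]

theorem Matrix.det_of_ite_add_eq {k n : ℕ} {r l : Fin k → ℕ} (hr : StrictAnti r)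
    (hl : StrictAnti l) (c : R) :
    det (of fun i j => if r i + l j = n then c else 0)
      = if ∀ j, r j + l (Fin.rev j) = n then (-1) ^ (k / 2) * c ^ k else 0 := by
  have hsupport : ∀ σ : Perm (Fin k),
      (∀ i, r (σ i) + l i = n) ↔ σ = Fin.revPerm ∧ ∀ j, r j + l (Fin.rev j) = n := by
    refine fun σ => ⟨fun h => ?_, fun ⟨hσ, h⟩ i => by simpa [hσ] using h (Fin.rev i)⟩
    have hσ : σ = Fin.revPerm := Fin.eq_revPerm_of_strictAnti fun i j hij =>
      hr.lt_iff_gt.mp (by have := hl hij; have := h i; have := h j; omega)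
    exact ⟨hσ, fun j => by simpa [hσ] using h (Fin.rev j)⟩
  rw [det_apply']
  simp only [of_apply, prod_ite_zero, mem_univ, true_imp_iff, prod_const, card_univ,
    Fintype.card_fin, hsupport, ite_and, mul_ite, mul_zero, sum_ite_eq', if_true, Fin.sign_revPerm]
  norm_cast

end Determinants

section PowerSums

variable {K : Type*} [CommRing K] [IsDomain K] {N : ℕ} {ζ : K}

theorem IsPrimitiveRoot.sum_nthRoots_pow (hζ : IsPrimitiveRoot ζ N) {α w : K} (hα : α ^ N = w)
    (m : ℕ) : ((nthRoots N w).map (· ^ m)).sum = if N ∣ m then N * w ^ (m / N) else 0 := by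
  have hsum : ((nthRoots N w).map (· ^ m)).sum = α ^ m * ∑ j ∈ range N, (ζ ^ m) ^ j := by
    rw [hζ.nthRoots_eq hα, Multiset.map_map, ← Finset.range_val, ← Finset.sum_eq_multiset_sum,
      Finset.mul_sum]
    refine Finset.sum_congr rfl fun j _ => ?_
    simp only [Function.comp_apply]
    ring
  split_ifs with hm
  · have hαm : α ^ m = w ^ (m / N) := by rw [← hα, ← pow_mul, Nat.mul_div_cancel' hm]
    rw [hsum, (hζ.pow_eq_one_iff_dvd m).2 hm, hαm]
    simp [mul_comm]
  · have hne : ζ ^ m ≠ 1 := fun h => hm (hζ.dvd_of_pow_eq_one m h)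
    have hgeom : (∑ j ∈ range N, (ζ ^ m) ^ j) * (ζ ^ m - 1) = 0 := by
      rw [geom_sum_mul, ← pow_mul, mul_comm, pow_mul, hζ.pow_eq_one, one_pow, sub_self]
    rw [hsum, (mul_eq_zero.mp hgeom).resolve_right (sub_ne_zero.mpr hne), mul_zero]

theorem IsPrimitiveRoot.sum_nthRootsFinset_pow (hζ : IsPrimitiveRoot ζ N) {α w : K}
    (hα : α ^ N = w) (hw : w ≠ 0) (m : ℕ) :
    ∑ z ∈ nthRootsFinset N w, z ^ m = if N ∣ m then N * w ^ (m / N) else 0 := by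
  classical
  rw [nthRootsFinset_def, ← Multiset.toFinset_eq (hζ.nthRoots_nodup hw), sum_eq_multiset_sum]
  exact hζ.sum_nthRoots_pow hα m

end PowerSums

theorem Complex.sum_nthRootsFinset_pow_succ {n : ℕ} {w : ℂ} (hw : w ≠ 0) {a : ℕ}
    (ha : a ≤ 2 * n) :
    ∑ z ∈ nthRootsFinset (n + 1) w, z ^ (a + 1) = if a = n then ((n : ℂ) + 1) * w else 0 := by
  obtain ⟨α, hα⟩ := IsAlgClosed.exists_pow_nat_eq w n.succ_pos
  rw [(Complex.isPrimitiveRoot_exp _ n.succ_ne_zero).sum_nthRootsFinset_pow hα hw]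
  have hdvd : n + 1 ∣ a + 1 ↔ a = n := by
    refine ⟨fun ⟨q, hq⟩ => ?_, fun h => h ▸ dvd_rfl⟩
    rcases q with _ | _ | q <;> [omega; omega; nlinarith]
  by_cases h : a = n
  · simp [h]
  · rw [if_neg (hdvd.not.mpr h), if_neg h]

theorem grothendieck_residue_sum_general (n k : ℕ)
    (w : ℂ) (hw : w ≠ 0)
    (r l : Fin k → ℕ) (hr : StrictAnti r) (hl : StrictAnti l)
    (hrn : ∀ j, r j ≤ n) (hln : ∀ j, l j ≤ n) :
    (∑ t ∈ Fintype.piFinset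
        (fun _ : Fin k => (Polynomial.X ^ (n + 1) - Polynomial.C w).roots.toFinset),
        Matrix.det (Matrix.of fun i j : Fin k => t i ^ r j)
          * Matrix.det (Matrix.of fun i j : Fin k => t i ^ l j)
          * ∏ i, t i)
      = if ∀ j, r j + l (Fin.rev j) = n
          then (Nat.factorial k : ℂ) * (((n : ℂ) + 1) * w) ^ k * (-1 : ℂ) ^ (k / 2)
          else 0 := by
  have hroots : (X ^ (n + 1) - C w).roots.toFinset = nthRootsFinset (n + 1) w :=
    (nthRootsFinset_def _ _).symm
  have hgram : ∀ i j, ∑ z ∈ nthRootsFinset (n + 1) w, z ^ r i * z ^ l j * z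
      = if r i + l j = n then ((n : ℂ) + 1) * w else 0 := fun i j => by
    rw [← Complex.sum_nthRootsFinset_pow_succ hw (by linarith [hrn i, hln j])]
    exact sum_congr rfl fun z _ => by ring
  rw [hroots]
  calc _ = (k.factorial : ℂ) * det (of fun i j => ∑ z ∈ nthRootsFinset (n + 1) w,
          z ^ r i * z ^ l j * z) := by
        simpa using sum_det_mul_det_mul_prod (nthRootsFinset (n + 1) w)
          (fun j z => z ^ r j) (fun j z => z ^ l j) id
    _ = _ := by
        simp only [hgram, det_of_ite_add_eq hr hl]
        split_ifs <;> ring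

/-- **Lemma 3.4(i) of the paper** (computational content).
For `w ≠ 0` and strictly decreasing sequences `r, l : Fin k → ℕ` with values in
`{0,…,n}`, the sum over all `k`-tuples `t` of `(n+1)`-th roots of `w` of
`det(t_i^{r_j})·det(t_i^{l_j})·t_1⋯t_k` equals
`k!·((n+1)w)^k·(−1)^⌊k/2⌋` if `r_j + l_{k+1−j} = n` for all `j`, and `0` otherwise. -/
theorem grothendieck_residue_sum (n k : ℕ) (hk : 1 ≤ k) (hkn : k ≤ n)
    (w : ℂ) (hw : w ≠ 0)
    (r l : Fin k → ℕ) (hr : StrictAnti r) (hl : StrictAnti l)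
    (hrn : ∀ j, r j ≤ n) (hln : ∀ j, l j ≤ n) :
    (∑ t ∈ Fintype.piFinset
        (fun _ : Fin k => (Polynomial.X ^ (n + 1) - Polynomial.C w).roots.toFinset),
        Matrix.det (Matrix.of fun i j : Fin k => t i ^ r j)
          * Matrix.det (Matrix.of fun i j : Fin k => t i ^ l j)
          * ∏ i, t i)
      = if ∀ j, r j + l (Fin.rev j) = n
          then (Nat.factorial k : ℂ) * (((n : ℂ) + 1) * w) ^ k * (-1 : ℂ) ^ (k / 2)
          else 0 :=
  grothendieck_residue_sum_general n k w hw r l hr hl hrn hln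
end

section
/- Let R be a commutative ring, k ≥ 1, t_1,…,t_k ∈ R and μ_1,…,μ_k ∈ ℕ. Then (t_1 + ⋯ + t_k) · det((t_i^{μ_j})_{1≤i,j≤k}) = Σ_{j=1}^{k} det(M_j), where M_j is the k×k matrix whose (i,j')-entry is t_i^{μ_{j'}} for j' ≠ j and t_i^{μ_j + 1} for j' = j. -/
open scoped BigOperators

/-- **The Pieri-type alternant identity** underlying Lemma 3.5 of the paper:
in any commutative ring, `(t_1 + ⋯ + t_k)·det(t_i^{μ_j})` equals the sum over
`j` of the determinants obtained by raising the exponent of the `j`-th column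
by one. -/
theorem e1_mul_alternant {R : Type*} [CommRing R] (k : ℕ) (hk : 1 ≤ k)
    (t : Fin k → R) (μ : Fin k → ℕ) :
    (∑ i, t i) * Matrix.det (Matrix.of fun i j : Fin k => t i ^ μ j)
      = ∑ j : Fin k, Matrix.det
          (Matrix.of fun i j' : Fin k =>
            if j' = j then t i ^ (μ j + 1) else t i ^ μ j') := by
  simp only [Matrix.det_apply, Matrix.of_apply]
  rw [Finset.sum_comm, Finset.mul_sum]
  refine Finset.sum_congr rfl fun σ _ => ?_
  have key : ∀ j : Fin k,
      (∏ i : Fin k, if i = j then t (σ i) ^ (μ j + 1) else t (σ i) ^ μ i)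
        = t (σ j) * ∏ i : Fin k, t (σ i) ^ μ i := by
    intro j
    have : ∀ i : Fin k,
        (if i = j then t (σ i) ^ (μ j + 1) else t (σ i) ^ μ i)
          = (if i = j then t (σ i) else 1) * t (σ i) ^ μ i := by
      intro i
      by_cases h : i = j
      · subst h; simp [pow_succ, mul_comm]
      · simp [h]
    rw [Finset.prod_congr rfl fun i _ => this i, Finset.prod_mul_distrib,
      Finset.prod_ite_eq' Finset.univ j (fun i => t (σ i))]
    simp
  simp only [key]
  rw [← Finset.smul_sum, ← Finset.sum_mul, Equiv.sum_comp σ t, mul_smul_comm]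
end

section
/- Fix integers n ≥ 2 and 1 ≤ k ≤ n−1. Let w be a family of real numbers w_S indexed by the k-element subsets S of ℤ/(n+1)ℤ, and let v_{i,j} ∈ ℝ (i,j ∈ ℤ/(n+1)ℤ) be such that w_S = w_T + v_{i,j} whenever i ∈ S, j ∈ T and S∖{i} = T∖{j} (condition (II')). Then: (1) v_{i,j} = −v_{j,i} for all i,j; (2) v_{i,j} + v_{j,l} = v_{i,l} for all i,j,l; (3) if in addition w_S + w_{ν(S)} = 0 for every k-element subset S, where ν : ℤ/(n+1)ℤ → ℤ/(n+1)ℤ is the involution ν(i) = −1−i (condition (I)), then v_{−1−i,−1−j} = −v_{i,j} for all i,j. -/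
/-!
Taking `S = insert i A`, `T = insert j A` for a `(k-1)`-set `A` avoiding `i` and `j` turns (II')
into `v i j = w (insert i A) - w (insert j A)`, so on pairs (or triples) avoided by one common
`A` the family `v` is a coboundary of `i ↦ w (insert i A)`; antisymmetry and the cocycle identity
follow at once. Such an `A` avoiding three points exists since `k + 2 ≤ n + 1`. Under (I), the
involution `ν` maps this coboundary expression for `v i j` to the one for `v (ν i) (ν j)`, with
the opposite sign.
-/

open Finset

theorem Finset.exists_card_eq_disjoint {α : Type*} [Fintype α] [DecidableEq α] (B : Finset α)
    {m : ℕ} (hm : m + #B ≤ Fintype.card α) : ∃ A : Finset α, #A = m ∧ Disjoint A B := by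
  have hle : m ≤ #(univ \ B) := by
    rw [card_sdiff_of_subset (subset_univ B), card_univ]
    omega
  obtain ⟨A, hAB, hA⟩ := exists_subset_card_eq hle
  exact ⟨A, hA, disjoint_of_subset_left hAB sdiff_disjoint⟩

variable {α G : Type*} [DecidableEq α] [AddCommGroup G]

/-- Condition (II') of the paper for `k`-subsets. -/
def ExchangeCondition (k : ℕ) (w : Finset α → G) (v : α → α → G) : Prop :=
  ∀ (S T : Finset α) (i j : α), #S = k → #T = k → i ∈ S → j ∈ T → S.erase i = T.erase j →
    w S = w T + v i j

namespace ExchangeCondition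

variable {k : ℕ} {w : Finset α → G} {v : α → α → G}

theorem apply_eq_sub (h : ExchangeCondition k w v) {A : Finset α} (hA : #A + 1 = k) {i j : α}
    (hi : i ∉ A) (hj : j ∉ A) : v i j = w (insert i A) - w (insert j A) := by
  have hw := h (insert i A) (insert j A) i j (by rw [card_insert_of_notMem hi, hA])
    (by rw [card_insert_of_notMem hj, hA]) (mem_insert_self i A) (mem_insert_self j A)
    (by rw [erase_insert hi, erase_insert hj])
  rw [hw, add_sub_cancel_left]

variable [Fintype α]

theorem exists_avoiding (hk : 1 ≤ k) (B : Finset α) (hB : k + #B ≤ Fintype.card α + 1) :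
    ∃ A : Finset α, #A + 1 = k ∧ ∀ x ∈ B, x ∉ A := by
  obtain ⟨A, hA, hAB⟩ := B.exists_card_eq_disjoint (m := k - 1) (by omega)
  exact ⟨A, by omega, fun x hx hxA => disjoint_left.mp hAB hxA hx⟩

theorem antisymm (h : ExchangeCondition k w v) (hk : 1 ≤ k) (hkα : k + 1 ≤ Fintype.card α)
    (i j : α) : v i j = -v j i := by
  obtain ⟨A, hA, hiA⟩ := exists_avoiding hk {i, j} (by have := card_le_two (a := i) (b := j); omega)
  rw [h.apply_eq_sub hA (hiA i (by simp)) (hiA j (by simp)),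
    h.apply_eq_sub hA (hiA j (by simp)) (hiA i (by simp)), neg_sub]

theorem add_eq (h : ExchangeCondition k w v) (hk : 1 ≤ k) (hkα : k + 2 ≤ Fintype.card α)
    (i j l : α) : v i j + v j l = v i l := by
  obtain ⟨A, hA, hiA⟩ :=
    exists_avoiding hk {i, j, l} (by have := card_le_three (a := i) (b := j) (c := l); omega)
  rw [h.apply_eq_sub hA (hiA i (by simp)) (hiA j (by simp)),
    h.apply_eq_sub hA (hiA j (by simp)) (hiA l (by simp)),
    h.apply_eq_sub hA (hiA i (by simp)) (hiA l (by simp)), sub_add_sub_cancel]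

theorem apply_map_eq_neg (h : ExchangeCondition k w v) (hk : 1 ≤ k)
    (hkα : k + 1 ≤ Fintype.card α) {ν : α → α} (hν : Function.Injective ν)
    (hw : ∀ S : Finset α, #S = k → w S + w (S.image ν) = 0) (i j : α) :
    v (ν i) (ν j) = -v i j := by
  obtain ⟨A, hA, hiA⟩ := exists_avoiding hk {i, j} (by have := card_le_two (a := i) (b := j); omega)
  have hi : i ∉ A := hiA i (by simp)
  have hj : j ∉ A := hiA j (by simp)
  have hνA : #(A.image ν) + 1 = k := by rw [card_image_of_injective A hν, hA]
  have hw_neg {x : α} (hx : x ∉ A) : w (insert (ν x) (A.image ν)) = -w (insert x A) := by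
    rw [← image_insert]
    exact eq_neg_of_add_eq_zero_right (hw _ (by rw [card_insert_of_notMem hx, hA]))
  have hνi : ν i ∉ A.image ν := hν.mem_finset_image.not.mpr hi
  have hνj : ν j ∉ A.image ν := hν.mem_finset_image.not.mpr hj
  rw [h.apply_eq_sub hνA hνi hνj, hw_neg hi, hw_neg hj, h.apply_eq_sub hA hi hj, neg_sub,
    sub_neg_eq_add, neg_add_eq_sub]

end ExchangeCondition

theorem exchange_cocycle_properties_general (n k : ℕ) (hk1 : 1 ≤ k)
    (hk2 : k ≤ n - 1)
    (w : Finset (ZMod (n + 1)) → ℝ) (v : ZMod (n + 1) → ZMod (n + 1) → ℝ)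
    (hII : ∀ (S T : Finset (ZMod (n + 1))) (i j : ZMod (n + 1)),
        S.card = k → T.card = k → i ∈ S → j ∈ T → S.erase i = T.erase j →
        w S = w T + v i j) :
    (∀ i j, v i j = - v j i)
    ∧ (∀ i j l, v i j + v j l = v i l)
    ∧ ((∀ S : Finset (ZMod (n + 1)), S.card = k →
          w S + w (S.image fun i => -1 - i) = 0) →
        ∀ i j, v (-1 - i) (-1 - j) = - v i j) := by
  have h : ExchangeCondition k w v := hII
  have hkα : k + 2 ≤ Fintype.card (ZMod (n + 1)) := by rw [ZMod.card]; omega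
  exact ⟨h.antisymm hk1 (by omega), h.add_eq hk1 hkα,
    fun hI => h.apply_map_eq_neg hk1 (by omega) (sub_right_injective (b := -1)) hI⟩

/-- **Lemma 4.1 of the paper.**  If a family `w_S` indexed by `k`-element subsets
of `ℤ/(n+1)ℤ` satisfies condition (II') with respect to a family `v_{i,j}`, then
`v` is antisymmetric and cocyclic, and under condition (I) it satisfies
`v_{−1−i,−1−j} = −v_{i,j}`. -/
theorem exchange_cocycle_properties (n k : ℕ) (hn : 2 ≤ n) (hk1 : 1 ≤ k)
    (hk2 : k ≤ n - 1)
    (w : Finset (ZMod (n + 1)) → ℝ) (v : ZMod (n + 1) → ZMod (n + 1) → ℝ)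
    (hII : ∀ (S T : Finset (ZMod (n + 1))) (i j : ZMod (n + 1)),
        S.card = k → T.card = k → i ∈ S → j ∈ T → S.erase i = T.erase j →
        w S = w T + v i j) :
    (∀ i j, v i j = - v j i)
    ∧ (∀ i j l, v i j + v j l = v i l)
    ∧ ((∀ S : Finset (ZMod (n + 1)), S.card = k →
          w S + w (S.image fun i => -1 - i) = 0) →
        ∀ i j, v (-1 - i) (-1 - j) = - v i j) :=
  exchange_cocycle_properties_general n k hk1 hk2 w v hII
end

section
/- Fix integers n ≥ 1 and 1 ≤ k ≤ n. Let w_S ∈ ℝ, indexed by the k-element subsets S of ℤ/(n+1)ℤ, satisfy condition (I): w_S + w_{ν(S)} = 0 for all S, where ν(i) = −1−i, and condition (II'): there is a family v_{i,j} ∈ ℝ (i,j ∈ ℤ/(n+1)ℤ) with w_S = w_T + v_{i,j} whenever i ∈ S, j ∈ T and S∖{i} = T∖{j}. Define w_i = ½ v_{i,−1−i}. Then for every k-element subset S of ℤ/(n+1)ℤ, w_S = Σ_{i ∈ S} w_i. -/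
open scoped BigOperators

/-- **Proposition 4.3 of the paper.**  If a family `w_S` of real numbers indexed
by `k`-element subsets of `ℤ/(n+1)ℤ` satisfies conditions (I) and (II') with a
family `v_{i,j}`, then it splits as `w_S = Σ_{i∈S} w_i` where `w_i = ½ v_{i,−1−i}`. -/
theorem splitting_of_symmetric_family (n k : ℕ) (hn : 1 ≤ n) (hk1 : 1 ≤ k)
    (hk2 : k ≤ n)
    (w : Finset (ZMod (n + 1)) → ℝ) (v : ZMod (n + 1) → ZMod (n + 1) → ℝ)
    (hI : ∀ S : Finset (ZMod (n + 1)), S.card = k →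
        w S + w (S.image fun i => -1 - i) = 0)
    (hII : ∀ (S T : Finset (ZMod (n + 1))) (i j : ZMod (n + 1)),
        S.card = k → T.card = k → i ∈ S → j ∈ T → S.erase i = T.erase j →
        w S = w T + v i j) :
    ∀ S : Finset (ZMod (n + 1)), S.card = k →
      w S = ∑ i ∈ S, v i (-1 - i) / 2 := by
  classical
  set ν : ZMod (n + 1) → ZMod (n + 1) := fun i => -1 - i with hν
  have hνν : ∀ i, ν (ν i) = i := by intro i; show -1 - (-1 - i) = i; ring
  have hνinj : ∀ i j, ν i = ν j → i = j := by
    intro i j h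
    have := congrArg ν h
    rwa [hνν, hνν] at this
  have hcard : Fintype.card (ZMod (n + 1)) = n + 1 := ZMod.card _
  -- v i i = 0
  have hvii : ∀ i : ZMod (n + 1), v i i = 0 := by
    intro i
    obtain ⟨S, hiS, hScard⟩ := Finset.exists_superset_card_eq (s := {i}) (n := k)
      (by simpa using hk1) (by omega)
    have hi : i ∈ S := hiS (Finset.mem_singleton_self i)
    have := hII S S i i hScard hScard hi hi rfl
    linarith
  -- antisymmetry
  have hanti : ∀ i j : ZMod (n + 1), i ≠ j → v i j + v j i = 0 := by
    intro i j hij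
    have hsub : ({i} : Finset (ZMod (n + 1))) ⊆ Finset.univ.erase j := by
      simp [hij]
    have hcard' : k ≤ (Finset.univ.erase j : Finset (ZMod (n + 1))).card := by
      rw [Finset.card_erase_of_mem (Finset.mem_univ j), Finset.card_univ, hcard]
      omega
    obtain ⟨S, hiS, hSsub, hScard⟩ :=
      Finset.exists_subsuperset_card_eq hsub (by simpa using hk1) hcard'
    have hi : i ∈ S := hiS (Finset.mem_singleton_self i)
    have hj : j ∉ S := fun h => (Finset.mem_erase.1 (hSsub h)).1 rfl
    have hj' : j ∉ S.erase i := fun h => hj (Finset.mem_of_mem_erase h)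
    set T := insert j (S.erase i) with hT
    have hTcard : T.card = k := by
      rw [hT, Finset.card_insert_of_notMem hj', Finset.card_erase_of_mem hi, hScard]
      omega
    have herase : S.erase i = T.erase j := (Finset.erase_insert hj').symm
    have h1 := hII S T i j hScard hTcard hi (Finset.mem_insert_self j _) herase
    have h2 := hII T S j i hTcard hScard (Finset.mem_insert_self j _) hi herase.symm
    linarith
  -- chain lemma
  have chain : ∀ A : Finset (ZMod (n + 1)), ∀ S : Finset (ZMod (n + 1)),
      S.card = k → A ⊆ S → (∀ i ∈ A, ν i ∉ S) →
      w S = w ((S \ A) ∪ A.image ν) + ∑ i ∈ A, v i (ν i) := by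
    intro A
    induction A using Finset.induction_on with
    | empty => intro S hS _ _; simp
    | @insert a A' ha IH =>
      intro S hS hsub hnot
      have haS : a ∈ S := hsub (Finset.mem_insert_self a A')
      have hA'S : A' ⊆ S := fun x hx => hsub (Finset.mem_insert_of_mem hx)
      have hνa : ν a ∉ S := hnot a (Finset.mem_insert_self a A')
      set S' := insert (ν a) (S.erase a) with hS'
      have hνa' : ν a ∉ S.erase a := fun h => hνa (Finset.mem_of_mem_erase h)
      have hS'card : S'.card = k := by
        rw [hS', Finset.card_insert_of_notMem hνa', Finset.card_erase_of_mem haS, hS]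
        omega
      have herase : S.erase a = S'.erase (ν a) := (Finset.erase_insert hνa').symm
      have hstep : w S = w S' + v a (ν a) :=
        hII S S' a (ν a) hS hS'card haS (Finset.mem_insert_self _ _) herase
      have hA'S' : A' ⊆ S' := by
        intro x hx
        exact Finset.mem_insert_of_mem (Finset.mem_erase.2
          ⟨fun hxa => ha (hxa ▸ hx), hA'S hx⟩)
      have hnot' : ∀ i ∈ A', ν i ∉ S' := by
        intro i hi h
        rcases Finset.mem_insert.1 h with h' | h'
        · exact ha ((hνinj i a h') ▸ hi)
        · exact hnot i (Finset.mem_insert_of_mem hi) (Finset.mem_of_mem_erase h')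
      have IHres := IH S' hS'card hA'S' hnot'
      have hνaA' : ν a ∉ A' := fun h => hνa (hA'S h)
      have hseteq : (S' \ A') ∪ A'.image ν = (S \ insert a A') ∪ (insert a A').image ν := by
        ext x
        simp only [hS', Finset.mem_union, Finset.mem_sdiff, Finset.mem_insert,
          Finset.mem_erase, Finset.mem_image]
        constructor
        · rintro (⟨h1 | ⟨h1, h2⟩, h3⟩ | ⟨b, hb, rfl⟩)
          · exact Or.inr ⟨a, Or.inl rfl, h1.symm⟩
          · exact Or.inl ⟨h2, fun h => h.elim (fun h => h1 h) h3⟩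
          · exact Or.inr ⟨b, Or.inr hb, rfl⟩
        · rintro (⟨h1, h2⟩ | ⟨b, hb | hb, rfl⟩)
          · exact Or.inl ⟨Or.inr ⟨fun h => h2 (Or.inl h), h1⟩,
              fun h => h2 (Or.inr h)⟩
          · subst hb; exact Or.inl ⟨Or.inl rfl, hνaA'⟩
          · exact Or.inr ⟨b, hb, rfl⟩
      rw [hstep, IHres, hseteq, Finset.sum_insert ha]
      ring
  -- main argument
  intro S hS
  set A := S.filter (fun i => ν i ∉ S) with hA
  have hAsub : A ⊆ S := Finset.filter_subset _ _
  have hAnot : ∀ i ∈ A, ν i ∉ S := fun i hi => (Finset.mem_filter.1 hi).2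
  have hchain := chain A S hS hAsub hAnot
  have himg : (S \ A) ∪ A.image ν = S.image (fun i => -1 - i) := by
    ext x
    simp only [hA, Finset.mem_union, Finset.mem_sdiff, Finset.mem_filter,
      Finset.mem_image, not_and, not_not]
    constructor
    · rintro (⟨h1, h2⟩ | ⟨b, ⟨hb1, hb2⟩, rfl⟩)
      · exact ⟨ν x, h2 h1, hνν x⟩
      · exact ⟨b, hb1, rfl⟩
    · rintro ⟨b, hb, rfl⟩
      by_cases hx : ν b ∈ S
      · left
        refine ⟨hx, fun _ => ?_⟩
        show ν (ν b) ∈ S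
        rwa [hνν]
      · right
        exact ⟨b, ⟨hb, hx⟩, rfl⟩
  have hIres := hI S hS
  rw [← himg] at hIres
  have h2wS : 2 * w S = ∑ i ∈ A, v i (ν i) := by linarith
  have key : ∀ a, v a (ν a) + v (ν a) (ν (ν a)) = 0 := by
    intro a
    rcases eq_or_ne a (ν a) with h | h
    · have h1 : v a (ν a) = 0 := by rw [← h]; exact hvii a
      have h2 : v (ν a) (ν (ν a)) = 0 := by rw [hνν, ← h]; exact hvii a
      rw [h1, h2]; ring
    · have := hanti a (ν a) h
      rw [hνν]; linarith
  have hBzero : ∑ i ∈ S.filter (fun i => ν i ∈ S), v i (ν i) = 0 := by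
    refine Finset.sum_involution (fun a _ => ν a) ?_ ?_ ?_ ?_
    · intro a _
      exact key a
    · intro a _ hfa h
      have h' : ν a = a := h
      have hz : v a (ν a) = 0 := by rw [h']; exact hvii a
      exact hfa hz
    · intro a ha
      have := Finset.mem_filter.1 ha
      exact Finset.mem_filter.2 ⟨this.2, by rw [hνν]; exact this.1⟩
    · intro a _; exact hνν a
  have hsplit := Finset.sum_filter_add_sum_filter_not S (fun i => ν i ∈ S)
    (fun i => v i (ν i))
  have hfin : ∑ i ∈ S, v i (ν i) = ∑ i ∈ A, v i (ν i) := by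
    rw [← hsplit, hBzero, zero_add]
  have : ∑ i ∈ S, v i (-1 - i) / 2 = (∑ i ∈ S, v i (ν i)) / 2 := by
    rw [← Finset.sum_div]
  rw [this, hfin]
  linarith
end
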